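/- Let e, g : ω → ω and suppose e(g(i)) ≥ 2i for all but finitely many i. Let f be any gauge function with f(2^{-k}) = 2^{-e(k)} for all k ∈ ω. Then J_g ⊆ N^f, i.e. every A ∈ J_g satisfies ℋ^f(A) = 0. -/

import Mathlib

open MeasureTheory Set
open scoped ENNReal

/-- The Cantor space `2^ω = ℕ → Bool` carries the metric
`d(x,y) = 2^{-min{n : x n ≠ y n}}` (and `d(x,x) = 0`). -/
noncomputable local instance cantorMetric : MetricSpace (ℕ → Bool) := PiNat.metricSpace

/-- A gauge function: a nondecreasing function `f : [0,∞) → [0,∞)` with `f 0 = 0` and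
`lim_{x → 0⁺} f x = 0`. -/
structure IsGauge (f : ℝ → ℝ) : Prop where
  nonneg : ∀ x : ℝ, 0 ≤ x → 0 ≤ f x
  zero : f 0 = 0
  mono : MonotoneOn f (Ici 0)
  tendsto_zero : Filter.Tendsto f (nhdsWithin 0 (Ioi 0)) (nhds 0)

/-- The value `f(diam)` of a gauge function `f` on an extended-real diameter
(infinite diameters are sent to `∞`). -/
noncomputable def gaugeFn (f : ℝ → ℝ) : ℝ≥0∞ → ℝ≥0∞ := fun d =>
  if d = ∞ then ∞ else ENNReal.ofReal (f d.toReal)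

/-- The Hausdorff (outer) measure `ℋ^f` with gauge function `f`. -/
noncomputable def gaugeMeasure {X : Type*} [EMetricSpace X] (f : ℝ → ℝ) : OuterMeasure X :=
  OuterMeasure.mkMetric (gaugeFn f)

/-- `s` is an initial segment of `x : 2^ω`. -/
def InitSeg (s : List Bool) (x : ℕ → Bool) : Prop :=
  ∀ i : ℕ, (hi : i < s.length) → s.get ⟨i, hi⟩ = x i

/-- `[σ]_∞` : the set of `x ∈ 2^ω` having `σ n` as an initial segment for infinitely
many `n`. -/
def limsupCyl (σ : ℕ → List Bool) : Set (ℕ → Bool) :=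
  {x | ∃ᶠ n in Filter.atTop, InitSeg (σ n) x}

/-- The ideal `J_g = {A ⊆ 2^ω : ∃ σ, ht σ = g and A ⊆ [σ]_∞}`. -/
def Jg (g : ℕ → ℕ) : Set (Set (ℕ → Bool)) :=
  {A | ∃ σ : ℕ → List Bool, (∀ n, (σ n).length = g n) ∧ A ⊆ limsupCyl σ}

open Filter Topology Metric

/-! A set lying in infinitely many of the cylinders `[σ n]` is covered by every tail
`{[σ n] : n ≥ N}`. The cylinder `[σ n]` has diameter at most `2^{-g n}`, so its gauge value is at
most `2^{-e (g n)} ≤ 4^{-n}` for large `n`; the tail sums of this geometric series tend to `0`,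
and so do the diameters of the tails, because `f` being nondecreasing forces `e` to be monotone
and hence `g → ∞`. This is the first Borel–Cantelli lemma with `ℋ^f` in place of a measure. -/

namespace MeasureTheory.OuterMeasure

theorem mkMetric_setOfPred_frequently_eq_zero {X : Type*} [EMetricSpace X]
    (m : ℝ≥0∞ → ℝ≥0∞) {p : ℕ → X → Prop}
    {a : ℕ → ℝ≥0∞} (hdiam : Tendsto (fun n ↦ ediam {x | p n x}) atTop (𝓝 0))
    (hm : ∀ᶠ n in atTop, m (ediam {x | p n x}) ≤ a n) (ha : ∑' n, a n ≠ ∞) :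
    mkMetric m {x | ∃ᶠ n in atTop, p n x} = 0 := by
  set t : ℕ → ℕ → Set X := fun N i ↦ {x | p (i + N) x}
  have htail_diam : Tendsto (fun N ↦ ⨆ i, ediam (t N i)) atTop (𝓝 0) := by
    refine ENNReal.tendsto_nhds_zero.2 fun ε hε ↦ ?_
    obtain ⟨N₀, hN₀⟩ := eventually_atTop.1 (ENNReal.tendsto_nhds_zero.1 hdiam ε hε)
    exact eventually_atTop.2 ⟨N₀, fun N hN ↦ iSup_le fun i ↦ hN₀ _ (by omega)⟩
  have htail_cover : ∀ N, {x | ∃ᶠ n in atTop, p n x} ⊆ ⋃ i, t N i := fun N x hx ↦ by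
    obtain ⟨n, hn, hpn⟩ := frequently_atTop.1 hx N
    exact mem_iUnion.2 ⟨n - N, by simpa [t, Nat.sub_add_cancel hn] using hpn⟩
  obtain ⟨N₀, hN₀⟩ := eventually_atTop.1 hm
  refine nonpos_iff_eq_zero.1 ?_
  -- with the Borel σ-algebra, `mkMetric m` is the outer measure of `Measure.mkMetric m`
  borelize X
  rw [coe_mkMetric]
  calc Measure.mkMetric m {x | ∃ᶠ n in atTop, p n x}
      ≤ liminf (fun N ↦ ∑' i, m (ediam (t N i))) atTop :=
        Measure.mkMetric_le_liminf_tsum _ _ htail_diam t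
          (Eventually.of_forall fun N i ↦ le_iSup (fun i ↦ ediam (t N i)) i)
          (Eventually.of_forall htail_cover) m
    _ ≤ liminf (fun N ↦ ∑' i, a (i + N)) atTop :=
        liminf_le_liminf (eventually_atTop.2 ⟨N₀, fun N hN ↦
          ENNReal.tsum_le_tsum fun i ↦ hN₀ _ (by omega)⟩)
    _ = 0 := (ENNReal.tendsto_sum_nat_add a ha).liminf_eq

end MeasureTheory.OuterMeasure

theorem Monotone.tendsto_atTop_of_comp {ι α β : Type*} [LinearOrder α] [Preorder β]
    [NoMaxOrder β] {e : α → β} (he : Monotone e) {g : ι → α} {l : Filter ι}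
    (h : Tendsto (e ∘ g) l atTop) : Tendsto g l atTop :=
  tendsto_atTop.2 fun B ↦ by
    obtain ⟨c, hc⟩ := exists_gt (e B)
    filter_upwards [tendsto_atTop.1 h c] with i hi
    exact (he.reflect_lt (hc.trans_le hi)).le

lemma ENNReal.ofReal_half_pow (n : ℕ) : ENNReal.ofReal ((1 / 2 : ℝ) ^ n) = (2⁻¹ : ℝ≥0∞) ^ n := by
  rw [ENNReal.ofReal_pow (by norm_num), one_div, ENNReal.ofReal_inv_of_pos (by norm_num),
    ENNReal.ofReal_ofNat]

lemma ediam_setOf_initSeg_le (s : List Bool) :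
    ediam {x : ℕ → Bool | InitSeg s x} ≤ (2⁻¹ : ℝ≥0∞) ^ s.length := by
  refine ediam_le fun x hx y hy ↦ ?_
  have hxy : x ∈ PiNat.cylinder y s.length := fun i hi ↦ (hx i hi).symm.trans (hy i hi)
  rw [edist_dist, ← ENNReal.ofReal_half_pow]
  exact ENNReal.ofReal_le_ofReal (PiNat.mem_cylinder_iff_dist_le.1 hxy)

namespace IsGauge

variable {f : ℝ → ℝ}

lemma gaugeFn_le (hf : IsGauge f) {d : ℝ≥0∞} {r : ℝ} (hr : 0 ≤ r)
    (hd : d ≤ ENNReal.ofReal r) : gaugeFn f d ≤ ENNReal.ofReal (f r) := by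
  rw [gaugeFn, if_neg (ne_top_of_le_ne_top ENNReal.ofReal_ne_top hd)]
  exact ENNReal.ofReal_le_ofReal <| hf.mono ENNReal.toReal_nonneg hr
    (ENNReal.toReal_le_of_le_ofReal hr hd)

lemma monotone_of_apply_half_pow (hf : IsGauge f) {e : ℕ → ℕ}
    (hfe : ∀ k : ℕ, f ((1 / 2 : ℝ) ^ k) = (1 / 2 : ℝ) ^ (e k)) : Monotone e := fun k k' hk ↦ by
  have h := hf.mono (mem_Ici.2 (by positivity)) (mem_Ici.2 (by positivity))
    (pow_le_pow_of_le_one (by norm_num : (0 : ℝ) ≤ 1 / 2) (by norm_num) hk)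
  rwa [hfe, hfe, pow_le_pow_iff_right_of_lt_one₀ (by norm_num) (by norm_num)] at h

lemma gaugeFn_ediam_setOf_initSeg_le (hf : IsGauge f) {e : ℕ → ℕ}
    (hfe : ∀ k : ℕ, f ((1 / 2 : ℝ) ^ k) = (1 / 2 : ℝ) ^ (e k)) (s : List Bool) :
    gaugeFn f (ediam {x | InitSeg s x}) ≤ (2⁻¹ : ℝ≥0∞) ^ e s.length := by
  rw [← ENNReal.ofReal_half_pow, ← hfe]
  exact hf.gaugeFn_le (by positivity) (ENNReal.ofReal_half_pow _ ▸ ediam_setOf_initSeg_le s)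

end IsGauge

/-- Let `e, g : ω → ω` with `e (g i) ≥ 2 i` for all but finitely many
`i`, and let `f` be any gauge function with `f(2^{-k}) = 2^{-e k}` for all `k`.
Then `J_g ⊆ N^f`: every `A ∈ J_g` satisfies `ℋ^f(A) = 0`. -/
theorem stmt11 (e g : ℕ → ℕ) (heg : ∀ᶠ i in Filter.atTop, 2 * i ≤ e (g i))
    (f : ℝ → ℝ) (hf : IsGauge f)
    (hfe : ∀ k : ℕ, f ((1 / 2 : ℝ) ^ k) = (1 / 2 : ℝ) ^ (e k)) :
    ∀ A ∈ Jg g, gaugeMeasure f A = 0 := by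
  rintro A ⟨σ, hlen, hA⟩
  have hg : Tendsto g atTop atTop :=
    (hf.monotone_of_apply_half_pow hfe).tendsto_atTop_of_comp <|
      tendsto_atTop_mono' _ heg (tendsto_id.const_mul_atTop' two_pos)
  have hdiam : Tendsto (fun n ↦ ediam {x | InitSeg (σ n) x}) atTop (𝓝 0) := by
    exact tendsto_of_tendsto_of_tendsto_of_le_of_le tendsto_const_nhds
      ((ENNReal.tendsto_pow_atTop_nhds_zero_of_lt_one (by norm_num : (2⁻¹ : ℝ≥0∞) < 1)).comp hg)
      (fun _ ↦ zero_le) fun n ↦ by simpa [hlen] using ediam_setOf_initSeg_le (σ n)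
  have hgauge :
      ∀ᶠ n in atTop, gaugeFn f (ediam {x | InitSeg (σ n) x}) ≤ ((2⁻¹ : ℝ≥0∞) ^ 2) ^ n := by
    filter_upwards [heg] with n hn
    rw [← pow_mul]
    exact (hlen n ▸ hf.gaugeFn_ediam_setOf_initSeg_le hfe (σ n)).trans <|
      pow_le_pow_right_of_le_one' (by norm_num) hn
  exact measure_mono_null hA <| OuterMeasure.mkMetric_setOfPred_frequently_eq_zero _ hdiam
    hgauge (tsum_geometric_lt_top.2 (pow_lt_one₀ zero_le (by norm_num) two_ne_zero)).ne
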